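/- For every edge (u,v) ∈ E of the original graph with u < v, the pruned landmark labeling adds the entry (u, 1) to L(v); consequently in the label graph Ĝ there is a directed edge from v to u with weight 1. -/
import Mathlib


/-- The labels produced by pruned landmark labeling (with sources processed in
increasing index order and pruning via the 2-hop query): `(v, δ) ∈ pllLabel G u`
iff `δ` is the true distance `d(v,u)` and `v` is the minimal-index node lying on
any shortest path between `v` and `u` (the canonical characterization of the
labels PLL produces). -/
def pllLabel {V : Type*} [Fintype V] [LinearOrder V] (G : SimpleGraph V) (u : V) :
    Set (V × ℕ) :=
  {p | G.Reachable p.1 u ∧ p.2 = G.dist p.1 u ∧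
    ∀ w, G.Reachable p.1 w → G.dist p.1 w + G.dist w u = G.dist p.1 u → p.1 ≤ w}

/-- For every edge (u,v) of the original graph with u < v, PLL adds the entry
(u, 1) to L(v); equivalently the label graph has a directed edge from v to u
of weight 1. -/
theorem stmt6 {V : Type*} [Fintype V] [LinearOrder V] (G : SimpleGraph V)
    (hG : G.Connected) (u v : V) (hadj : G.Adj u v) (huv : u < v) :
    (u, 1) ∈ pllLabel G v := by
  have hreach : G.Reachable u v := hadj.reachable
  have hdist : G.dist u v = 1 := SimpleGraph.dist_eq_one_iff_adj.mpr hadj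
  refine ⟨hreach, hdist.symm, ?_⟩
  intro w hw hsum
  rw [hdist] at hsum
  rcases Nat.add_eq_one_iff.mp hsum with ⟨h1, h2⟩ | ⟨h1, h2⟩
  · exact le_of_eq (hw.dist_eq_zero_iff.mp h1)
  · have hwv : G.Reachable w v := hw.symm.trans hreach
    have := hwv.dist_eq_zero_iff.mp h2
    exact le_of_lt (this ▸ huv)
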